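/- Let (C,S) be a pair with C real symmetric n×n and S symmetric positive definite n×n, and let μ₁ ≥ ... ≥ μₙ be the generalized eigenvalues. The map A ↦ trace(AᵀCA(AᵀSA)⁻¹), defined on full-rank n×m matrices, achieves the value μ₁ + ... + μₘ, and this value is its supremum. -/

import Mathlib

/-!
Let `U` be the matrix whose rows are the `S`-orthonormal eigenvectors `vᵢ`, so that
`U S Uᵀ = 1` and `U C Uᵀ = diagonal μ`. Writing `A = Uᵀ W`, the quotient becomes
`tr (Wᵀ diag(μ) W (Wᵀ W)⁻¹) = ∑ μᵢ Pᵢᵢ`, where `P = W (Wᵀ W)⁻¹ Wᵀ` is the orthogonal projection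
onto the column space of `W`. The diagonal entries of `P` lie in `[0, 1]` and sum to `m`, and over
such weights an antitone `μ` is best paired with the indicator of the first `m` indices, which is
the value at `W = [e₁ … eₘ]`.
-/

open Matrix Finset

theorem Fin.sum_castLE_eq_sum_mul_ite {M : Type*} [NonAssocSemiring M] {n m : ℕ} (hmn : m ≤ n)
    (f : Fin n → M) :
    ∑ i : Fin m, f (Fin.castLE hmn i) = ∑ i : Fin n, f i * if (i : ℕ) < m then 1 else 0 :=
  Fintype.sum_of_injective _ (Fin.castLE_injective hmn) _ _
    (fun i hi => by rw [if_neg fun h => hi ⟨⟨i, h⟩, rfl⟩, mul_zero])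
    (fun i => by simp)

section TopSum

variable {R : Type*} [CommRing R] [LinearOrder R] [IsStrictOrderedRing R]

theorem sum_mul_le_sum_mul_of_sign_change {ι : Type*} [Fintype ι] (a t s : ι → R) (c : R)
    (hsign : ∀ i, (a i - c) * (t i - s i) ≤ 0) (hsum : ∑ i, t i = ∑ i, s i) :
    ∑ i, a i * t i ≤ ∑ i, a i * s i := by
  have hexpand : ∑ i, (a i - c) * (t i - s i)
      = ∑ i, a i * t i - ∑ i, a i * s i - c * (∑ i, t i - ∑ i, s i) := by
    simp only [sub_mul, mul_sub, sum_sub_distrib, mul_sum]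
    ring
  have := sum_nonpos (s := univ) fun i _ => hsign i
  rwa [hexpand, hsum, sub_self, mul_zero, sub_zero, sub_nonpos] at this

theorem Antitone.sum_mul_le_sum_castLE {n m : ℕ} (hmn : m ≤ n) {mu : Fin n → R}
    (hmu : Antitone mu) {t : Fin n → R} (ht : ∀ i, t i ∈ Set.Icc 0 1) (hsum : ∑ i, t i = m) :
    ∑ i, mu i * t i ≤ ∑ i : Fin m, mu (Fin.castLE hmn i) := by
  obtain rfl | hm := Nat.eq_zero_or_pos m
  · have ht0 : t = 0 :=
      (Fintype.sum_eq_zero_iff_of_nonneg fun i => (ht i).1).1 (by simpa using hsum)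
    simp [ht0]
  rw [Fin.sum_castLE_eq_sum_mul_ite]
  refine sum_mul_le_sum_mul_of_sign_change mu t _ (mu ⟨m - 1, by omega⟩) (fun i => ?_) ?_
  · by_cases hi : (i : ℕ) < m
    · rw [if_pos hi]
      exact mul_nonpos_of_nonneg_of_nonpos
        (sub_nonneg.2 (hmu (Fin.le_iff_val_le_val.2 (show (i : ℕ) ≤ m - 1 by omega))))
        (by linarith [(ht i).2])
    · rw [if_neg hi]
      exact mul_nonpos_of_nonpos_of_nonneg
        (sub_nonpos.2 (hmu (Fin.le_iff_val_le_val.2 (show m - 1 ≤ (i : ℕ) by omega))))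
        (by linarith [(ht i).1])
  · simpa [hsum] using Fin.sum_castLE_eq_sum_mul_ite (M := R) hmn fun _ => 1

end TopSum

namespace Matrix

theorem IsSymm.diag_mem_Icc_of_isIdempotentElem {R ι : Type*} [CommRing R] [LinearOrder R]
    [IsStrictOrderedRing R] [Fintype ι] {P : Matrix ι ι R} (hsymm : P.IsSymm)
    (hidem : IsIdempotentElem P) (i : ι) : P i i ∈ Set.Icc 0 1 := by
  have hsq : P i i = ∑ j, P i j ^ 2 := by
    conv_lhs => rw [← hidem.eq]
    simp only [mul_apply, sq]
    exact Finset.sum_congr rfl fun j _ => by rw [hsymm.apply i j]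
  have hle : P i i ^ 2 ≤ P i i :=
    hsq ▸ Finset.single_le_sum (f := fun j => P i j ^ 2) (fun j _ => sq_nonneg _)
      (Finset.mem_univ i)
  have hnonneg : 0 ≤ P i i := hsq ▸ Finset.sum_nonneg fun j _ => sq_nonneg _
  exact ⟨hnonneg, by nlinarith⟩

theorem transpose_submatrix_one_mul_mul {R ι κ : Type*} [Semiring R] [Fintype ι] [DecidableEq ι]
    (M : Matrix ι ι R) (e : κ → ι) :
    ((1 : Matrix ι ι R).submatrix id e)ᵀ * M * (1 : Matrix ι ι R).submatrix id e =
      M.submatrix e e := by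
  ext i j
  simp [mul_apply, one_apply]

section Field

variable {K ι κ : Type*} [Field K] [Fintype ι] [Fintype κ]

theorem rank_eq_card_of_mul_eq_one [DecidableEq κ] {A : Matrix ι κ K} {B : Matrix κ ι K}
    (h : B * A = 1) : A.rank = Fintype.card κ :=
  le_antisymm A.rank_le_card_width <| by simpa [h] using rank_mul_le_right B A

theorem isUnit_of_rank_eq_card [DecidableEq ι] {A : Matrix ι ι K}
    (h : A.rank = Fintype.card ι) : IsUnit A := by
  rw [← mulVec_surjective_iff_isUnit, ← coe_mulVecLin, ← LinearMap.range_eq_top]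
  exact Submodule.eq_top_of_finrank_eq (by simpa [rank] using h)

end Field

section CommRing

variable {R ι κ : Type*} [CommRing R] [Fintype ι]

theorem of_mul_mul_transpose_apply (v : κ → ι → R) (M : Matrix ι ι R) (i j : κ) :
    (of v * M * (of v)ᵀ) i j = v i ⬝ᵥ M *ᵥ v j := by
  simp only [mul_apply, of_apply, transpose_apply, dotProduct, mulVec, Finset.sum_mul,
    Finset.mul_sum]
  rw [Finset.sum_comm]
  exact Finset.sum_congr rfl fun _ _ => Finset.sum_congr rfl fun _ _ => by ring

variable [DecidableEq κ]

theorem of_mul_mul_transpose_eq_one {v : κ → ι → R} {S : Matrix ι ι R}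
    (hOrtho : ∀ i j, v i ⬝ᵥ S *ᵥ v j = if i = j then 1 else 0) :
    of v * S * (of v)ᵀ = 1 := by
  ext i j
  rw [of_mul_mul_transpose_apply, hOrtho, one_apply]

theorem of_mul_mul_transpose_eq_diagonal {v : κ → ι → R} {C S : Matrix ι ι R} {mu : κ → R}
    (hEig : ∀ i, C *ᵥ v i = mu i • S *ᵥ v i)
    (hOrtho : ∀ i j, v i ⬝ᵥ S *ᵥ v j = if i = j then 1 else 0) :
    of v * C * (of v)ᵀ = diagonal mu := by
  ext i j
  rw [of_mul_mul_transpose_apply, hEig, dotProduct_smul, hOrtho, diagonal_apply]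
  split_ifs with h <;> simp [h]

variable [Fintype κ]

/-- The orthogonal projection onto the column space of `W` (a junk value unless `Wᵀ * W` is
invertible). -/
noncomputable def colProj (W : Matrix ι κ R) : Matrix ι ι R := W * (Wᵀ * W)⁻¹ * Wᵀ

theorem isSymm_colProj (W : Matrix ι κ R) : (colProj W).IsSymm := by
  simp [colProj, IsSymm, transpose_mul, transpose_nonsing_inv, Matrix.mul_assoc]

theorem isIdempotentElem_colProj {W : Matrix ι κ R} (hW : IsUnit (Wᵀ * W)) :
    IsIdempotentElem (colProj W) := by
  have hG : IsUnit (Wᵀ * W).det := (isUnit_iff_isUnit_det _).1 hW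
  calc colProj W * colProj W = W * ((Wᵀ * W)⁻¹ * (Wᵀ * W)) * (Wᵀ * W)⁻¹ * Wᵀ := by
        simp only [colProj, Matrix.mul_assoc]
    _ = colProj W := by rw [nonsing_inv_mul _ hG, Matrix.mul_one, colProj]

theorem trace_colProj {W : Matrix ι κ R} (hW : IsUnit (Wᵀ * W)) :
    (colProj W).trace = Fintype.card κ := by
  rw [colProj, trace_mul_comm, ← Matrix.mul_assoc,
    mul_nonsing_inv _ ((isUnit_iff_isUnit_det _).1 hW), trace_one]

noncomputable def rayleighTrace (C S : Matrix ι ι R) (A : Matrix ι κ R) : R :=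
  (Aᵀ * C * A * (Aᵀ * S * A)⁻¹).trace

theorem rayleighTrace_transpose_mul (U C S : Matrix ι ι R) (W : Matrix ι κ R) :
    rayleighTrace C S (Uᵀ * W) = rayleighTrace (U * C * Uᵀ) (U * S * Uᵀ) W := by
  simp only [rayleighTrace, transpose_mul, transpose_transpose, Matrix.mul_assoc]

theorem rayleighTrace_diagonal_one [DecidableEq ι] (d : ι → R) (W : Matrix ι κ R) :
    rayleighTrace (diagonal d) 1 W = ∑ i, d i * colProj W i i := by
  have hcycle : Wᵀ * diagonal d * W * (Wᵀ * W)⁻¹ = Wᵀ * (diagonal d * W * (Wᵀ * W)⁻¹) := by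
    simp only [Matrix.mul_assoc]
  have hproj : diagonal d * W * (Wᵀ * W)⁻¹ * Wᵀ = diagonal d * colProj W := by
    simp only [colProj, Matrix.mul_assoc]
  rw [rayleighTrace, Matrix.mul_one, hcycle, trace_mul_comm, hproj]
  simp [trace, diagonal_mul]

end CommRing

theorem rayleighTrace_diagonal_one_le_sum_castLE {R : Type*} [CommRing R] [LinearOrder R]
    [IsStrictOrderedRing R] {n m : ℕ} (hmn : m ≤ n) {mu : Fin n → R} (hmu : Antitone mu)
    {W : Matrix (Fin n) (Fin m) R} (hW : IsUnit (Wᵀ * W)) :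
    rayleighTrace (diagonal mu) 1 W ≤ ∑ i : Fin m, mu (Fin.castLE hmn i) := by
  rw [rayleighTrace_diagonal_one]
  refine hmu.sum_mul_le_sum_castLE hmn
    ((isSymm_colProj W).diag_mem_Icc_of_isIdempotentElem (isIdempotentElem_colProj hW)) ?_
  simpa [trace] using trace_colProj hW

theorem rayleighTrace_diagonal_one_submatrix_castLE {R : Type*} [CommRing R] {n m : ℕ}
    (hmn : m ≤ n) (mu : Fin n → R) :
    rayleighTrace (diagonal mu) 1 ((1 : Matrix (Fin n) (Fin n) R).submatrix id (Fin.castLE hmn))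
      = ∑ i : Fin m, mu (Fin.castLE hmn i) := by
  have he := Fin.castLE_injective hmn
  rw [rayleighTrace, transpose_submatrix_one_mul_mul, transpose_submatrix_one_mul_mul,
    submatrix_one _ he, inv_one, Matrix.mul_one, submatrix_diagonal _ _ he, trace_diagonal]
  rfl

end Matrix

theorem gmrq_sup_attained_general (n m : ℕ) (hmn : m ≤ n)
    (C S : Matrix (Fin n) (Fin n) ℝ)
    (mu : Fin n → ℝ) (hmu : Antitone mu)
    (v : Fin n → Fin n → ℝ)
    (hEig : ∀ i, C.mulVec (v i) = mu i • S.mulVec (v i))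
    (hOrtho : ∀ i j, v i ⬝ᵥ S.mulVec (v j) = if i = j then (1 : ℝ) else 0) :
    (∃ A : Matrix (Fin n) (Fin m) ℝ, A.rank = m ∧
      (Aᵀ * C * A * (Aᵀ * S * A)⁻¹).trace = ∑ i : Fin m, mu (Fin.castLE hmn i)) ∧
    (∀ A : Matrix (Fin n) (Fin m) ℝ, A.rank = m →
      (Aᵀ * C * A * (Aᵀ * S * A)⁻¹).trace ≤ ∑ i : Fin m, mu (Fin.castLE hmn i)) := by
  set U := of v
  have hUS : U * S * Uᵀ = 1 := of_mul_mul_transpose_eq_one hOrtho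
  have hUC : U * C * Uᵀ = diagonal mu := of_mul_mul_transpose_eq_diagonal hEig hOrtho
  have hU : IsUnit Uᵀ.det := by
    rw [det_transpose]
    exact isUnit_det_of_right_inverse (by rwa [Matrix.mul_assoc] at hUS)
  have hreduce (W : Matrix (Fin n) (Fin m) ℝ) :
      rayleighTrace C S (Uᵀ * W) = rayleighTrace (diagonal mu) 1 W := by
    rw [rayleighTrace_transpose_mul, hUS, hUC]
  set E := (1 : Matrix (Fin n) (Fin n) ℝ).submatrix id (Fin.castLE hmn)
  refine ⟨⟨Uᵀ * E, ?_, ?_⟩, fun A hA => ?_⟩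
  · have hE : Eᵀ * E = 1 := by
      have := transpose_submatrix_one_mul_mul (1 : Matrix (Fin n) (Fin n) ℝ) (Fin.castLE hmn)
      rwa [Matrix.mul_one, submatrix_one _ (Fin.castLE_injective hmn)] at this
    rw [rank_mul_eq_right_of_isUnit_det _ _ hU, rank_eq_card_of_mul_eq_one hE, Fintype.card_fin]
  · exact (hreduce E).trans (rayleighTrace_diagonal_one_submatrix_castLE hmn mu)
  · obtain ⟨W, rfl⟩ : ∃ W, A = Uᵀ * W := ⟨Uᵀ⁻¹ * A, (mul_nonsing_inv_cancel_left _ _ hU).symm⟩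
    rw [rank_mul_eq_right_of_isUnit_det _ _ hU] at hA
    have hW : IsUnit (Wᵀ * W) :=
      isUnit_of_rank_eq_card (by rw [rank_transpose_mul_self, hA, Fintype.card_fin])
    exact (hreduce W).trans_le (rayleighTrace_diagonal_one_le_sum_castLE hmn hmu hW)

/-- The supremum of the generalized matrix Rayleigh quotient
`A ↦ trace (Aᵀ C A (Aᵀ S A)⁻¹)` over full-rank `n × m` matrices equals
`μ₁ + ... + μₘ`, the sum of the top `m` generalized eigenvalues of `(C, S)`,
and this value is attained. -/
theorem gmrq_sup_attained (n m : ℕ) (hmn : m ≤ n)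
    (C S : Matrix (Fin n) (Fin n) ℝ) (hC : C.IsSymm) (hS : S.PosDef)
    (mu : Fin n → ℝ) (hmu : Antitone mu)
    (v : Fin n → Fin n → ℝ)
    (hEig : ∀ i, C.mulVec (v i) = mu i • S.mulVec (v i))
    (hOrtho : ∀ i j, v i ⬝ᵥ S.mulVec (v j) = if i = j then (1 : ℝ) else 0) :
    (∃ A : Matrix (Fin n) (Fin m) ℝ, A.rank = m ∧
      (Aᵀ * C * A * (Aᵀ * S * A)⁻¹).trace = ∑ i : Fin m, mu (Fin.castLE hmn i)) ∧
    (∀ A : Matrix (Fin n) (Fin m) ℝ, A.rank = m →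
      (Aᵀ * C * A * (Aᵀ * S * A)⁻¹).trace ≤ ∑ i : Fin m, mu (Fin.castLE hmn i)) :=
  gmrq_sup_attained_general n m hmn C S mu hmu v hEig hOrtho
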